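/- Let M, N, r be positive integers, let V₁ ∈ ℂ^{M×N}, let U ∈ ℂ^{M×r} with Uᴴ·U = I_r, let W ∈ ℂ^{N×r} with Wᴴ·W = I_r, and let S ∈ ℂ^{r×r} be a diagonal invertible matrix. Define A := V₁·W·S⁻¹·Uᴴ ∈ ℂ^{M×M} and Ã := Uᴴ·V₁·W·S⁻¹ ∈ ℂ^{r×r}. Suppose λ ∈ ℂ with λ ≠ 0 and w ∈ ℂ^r satisfy Ã·w = λ·w. Then the vector φ := λ⁻¹·V₁·W·S⁻¹·w ∈ ℂ^M satisfies A·φ = λ·φ and Uᴴ·φ = w; in particular, if w ≠ 0 then φ ≠ 0, so every nonzero eigenvalue of Ã is an eigenvalue of A with eigenvector φ. -/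

import Mathlib

open Matrix

/-!
Writing `B = V₁·W·S⁻¹` and `C = Uᴴ`, the two DMD matrices are `A = B·C` and `Ã = C·B`.
For any `B`, `C`, the map `B` sends an eigenvector `w` of `C·B` to an eigenvector of `B·C`
for the same eigenvalue, and `C` sends `B·w` back to `λ·w`. After rescaling by `λ⁻¹`, `C`
is a left inverse on `φ`, which forces `φ ≠ 0` when `w ≠ 0`.
-/

namespace Matrix

variable {K m n : Type*} [Field K] [Fintype m] [Fintype n]
  {B : Matrix m n K} {C : Matrix n m K} {lam : K} {w : n → K}

theorem mul_mulVec_mulVec_eq_smul (hw : (C * B) *ᵥ w = lam • w) :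
    (B * C) *ᵥ (B *ᵥ w) = lam • (B *ᵥ w) := by
  rw [mulVec_mulVec, Matrix.mul_assoc, ← mulVec_mulVec, hw, mulVec_smul]

theorem mul_mulVec_smul_mulVec_eq_smul (hw : (C * B) *ᵥ w = lam • w) (c : K) :
    (B * C) *ᵥ (c • B *ᵥ w) = lam • (c • B *ᵥ w) := by
  rw [mulVec_smul, mul_mulVec_mulVec_eq_smul hw, smul_comm]

theorem mulVec_inv_smul_mulVec_eq (hlam : lam ≠ 0) (hw : (C * B) *ᵥ w = lam • w) :
    C *ᵥ (lam⁻¹ • B *ᵥ w) = w := by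
  rw [mulVec_smul, mulVec_mulVec, hw, inv_smul_smul₀ hlam]

end Matrix

theorem dmd_eigenvector_lift_general
    (M N r : ℕ)
    (V₁ : Matrix (Fin M) (Fin N) ℂ)
    (U : Matrix (Fin M) (Fin r) ℂ)
    (W : Matrix (Fin N) (Fin r) ℂ)
    (S : Matrix (Fin r) (Fin r) ℂ)
    (A : Matrix (Fin M) (Fin M) ℂ) (hA : A = V₁ * W * S⁻¹ * Uᴴ)
    (Atil : Matrix (Fin r) (Fin r) ℂ) (hAtil : Atil = Uᴴ * V₁ * W * S⁻¹)
    (lam : ℂ) (hlam : lam ≠ 0) (w : Fin r → ℂ) (hw : Atil *ᵥ w = lam • w)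
    (φ : Fin M → ℂ) (hφ : φ = lam⁻¹ • ((V₁ * W * S⁻¹) *ᵥ w)) :
    A *ᵥ φ = lam • φ ∧ Uᴴ *ᵥ φ = w ∧ (w ≠ 0 → φ ≠ 0) := by
  have hAtil' : Atil = Uᴴ * (V₁ * W * S⁻¹) := by
    rw [hAtil, Matrix.mul_assoc, Matrix.mul_assoc, ← Matrix.mul_assoc V₁]
  rw [hAtil'] at hw
  have hUφ : Uᴴ *ᵥ φ = w := hφ ▸ mulVec_inv_smul_mulVec_eq hlam hw
  refine ⟨hA ▸ hφ ▸ mul_mulVec_smul_mulVec_eq_smul hw lam⁻¹, hUφ, fun hw0 hφ0 => hw0 ?_⟩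
  rw [← hUφ, hφ0, mulVec_zero]

/-- For the exact-DMD matrices `A = V₁·W·S⁻¹·Uᴴ` and `Ã = Uᴴ·V₁·W·S⁻¹`, every
eigenpair `(λ, w)` of `Ã` with `λ ≠ 0` yields the eigenvector
`φ = λ⁻¹·V₁·W·S⁻¹·w` of `A` with `A·φ = λ·φ` and `Uᴴ·φ = w`; in particular
`w ≠ 0` implies `φ ≠ 0`. -/
theorem dmd_eigenvector_lift
    (M N r : ℕ) (hM : 0 < M) (hN : 0 < N) (hr : 0 < r)
    (V₁ : Matrix (Fin M) (Fin N) ℂ)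
    (U : Matrix (Fin M) (Fin r) ℂ) (hU : Uᴴ * U = 1)
    (W : Matrix (Fin N) (Fin r) ℂ) (hW : Wᴴ * W = 1)
    (S : Matrix (Fin r) (Fin r) ℂ) (hSdiag : S.IsDiag) (hSinv : IsUnit S.det)
    (A : Matrix (Fin M) (Fin M) ℂ) (hA : A = V₁ * W * S⁻¹ * Uᴴ)
    (Atil : Matrix (Fin r) (Fin r) ℂ) (hAtil : Atil = Uᴴ * V₁ * W * S⁻¹)
    (lam : ℂ) (hlam : lam ≠ 0) (w : Fin r → ℂ) (hw : Atil *ᵥ w = lam • w)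
    (φ : Fin M → ℂ) (hφ : φ = lam⁻¹ • ((V₁ * W * S⁻¹) *ᵥ w)) :
    A *ᵥ φ = lam • φ ∧ Uᴴ *ᵥ φ = w ∧ (w ≠ 0 → φ ≠ 0) :=
  dmd_eigenvector_lift_general M N r V₁ U W S A hA Atil hAtil lam hlam w hw φ hφ
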